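/- With A_WW := Σ_{j=1}^b s_j(s_j − 1) + Σ_{1≤j<j*≤b} s_j s_{j*}[2 + (ẽ_j − ẽ_{j*})ᵀC̃⁺(ẽ_j − ẽ_{j*})] and A_UW := Σ_{i=1}^u Σ_{j=1}^b s_j[(3/2) + ξ_{ij}ᵀC̃⁺ξ_{ij}], one has A_UW + A_WW = (1/2)w(3u + 2w − b − 1) + (1/2)k[w·tr(C̃⁺) + b·tr(C̃⁺S)], and A_UW + A_WW ≥ A_2bound := (1/2)w(3u + 2w − b − 1) + kw(b − 1)²/u. -/

import Mathlib

open Matrix BigOperators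

set_option maxHeartbeats 1000000

lemma half_offdiag {n : ℕ} (F : Fin n → Fin n → ℝ) (hF : ∀ i j, F i j = F j i) :
    ∑ i, ∑ j, (if i < j then F i j else 0)
      = ((∑ i, ∑ j, F i j) - ∑ i, F i i)/2 := by
  have key : ∀ i j : Fin n, (if i < j then F i j else 0) + (if j < i then F i j else 0)
      + (if i = j then F i j else 0) = F i j := by
    intro i j
    rcases lt_trichotomy i j with h | h | h
    · simp [h, asymm h, h.ne]
    · simp [h, lt_irrefl]
    · simp [h, asymm h, h.ne']
  have hsum : (∑ i, ∑ j, (if i < j then F i j else 0))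
      + (∑ i, ∑ j, (if j < i then F i j else 0))
      + (∑ i, ∑ j, (if i = j then F i j else 0)) = ∑ i, ∑ j, F i j := by
    rw [← Finset.sum_add_distrib, ← Finset.sum_add_distrib]
    apply Finset.sum_congr rfl; intro i _
    rw [← Finset.sum_add_distrib, ← Finset.sum_add_distrib]
    exact Finset.sum_congr rfl fun j _ => key i j
  have h2 : (∑ i, ∑ j, (if j < i then F i j else 0))
      = ∑ i, ∑ j, (if i < j then F i j else 0) := by
    rw [Finset.sum_comm]
    apply Finset.sum_congr rfl; intro i _
    apply Finset.sum_congr rfl; intro j _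
    simp only [hF i j]
  have h3 : (∑ i : Fin n, ∑ j, (if i = j then F i j else 0)) = ∑ i, F i i := by
    apply Finset.sum_congr rfl; intro i _
    simp
  rw [h2, h3] at hsum
  linarith

lemma quad_expand {b : ℕ} (G : Matrix (Fin b) (Fin b) ℝ) (v : Fin b → ℝ) (j : Fin b) :
    ((fun l => (if l = j then (1:ℝ) else 0) - (1/2)*v l) ⬝ᵥ
      G.mulVec (fun l => (if l = j then (1:ℝ) else 0) - (1/2)*v l))
    = G j j - (1/2)*(∑ m, G j m * v m) - (1/2)*(∑ l, v l * G l j)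
      + (1/4)*(∑ l, ∑ m, v l * G l m * v m) := by
  have hA : ∀ l, (G.mulVec (fun l => (if l = j then (1:ℝ) else 0) - (1/2)*v l)) l
      = G l j - (1/2)*(∑ m, G l m * v m) := by
    intro l
    simp only [Matrix.mulVec, dotProduct]
    have h1 : ∑ m, G l m * (if m = j then (1:ℝ) else 0) = G l j := by
      simp [mul_ite, Finset.sum_ite_eq']
    have h2 : ∑ m, G l m * ((1/2)*v m) = (1/2)*(∑ m, G l m * v m) := by
      rw [Finset.mul_sum]; exact Finset.sum_congr rfl fun m _ => by ring
    calc ∑ m, G l m * ((if m = j then (1:ℝ) else 0) - (1/2)*v m)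
        = ∑ m, (G l m * (if m = j then (1:ℝ) else 0) - G l m * ((1/2)*v m)) :=
          Finset.sum_congr rfl fun m _ => by ring
      _ = G l j - (1/2)*(∑ m, G l m * v m) := by rw [Finset.sum_sub_distrib, h1, h2]
  simp only [dotProduct]
  rw [Finset.sum_congr rfl fun l (_ : l ∈ Finset.univ) => by rw [hA l]]
  have h3 : ∀ l, ((if l = j then (1:ℝ) else 0) - (1/2)*v l)
        * (G l j - (1/2)*(∑ m, G l m * v m))
      = (if l = j then (G l j - (1/2)*(∑ m, G l m * v m)) else 0)
        - (1/2)*(v l * G l j) + (1/4)*(v l * ∑ m, G l m * v m) := by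
    intro l
    by_cases h : l = j
    · simp only [h, if_true]; ring
    · simp only [h, if_false]; ring
  rw [Finset.sum_congr rfl fun l (_ : l ∈ Finset.univ) => h3 l]
  rw [Finset.sum_add_distrib, Finset.sum_sub_distrib,
    Finset.sum_ite_eq' Finset.univ j (fun l => G l j - (1/2)*(∑ m, G l m * v m))]
  simp only [Finset.mem_univ, if_true]
  rw [← Finset.mul_sum, ← Finset.mul_sum]
  have h4 : ∑ l, v l * (∑ m, G l m * v m) = ∑ l, ∑ m, v l * G l m * v m := by
    apply Finset.sum_congr rfl; intro l _
    rw [Finset.mul_sum]; exact Finset.sum_congr rfl fun m _ => by ring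
  rw [h4]

lemma cs_aux (cjj gjj q : ℝ) (hdisc : ∀ t : ℝ, 0 ≤ gjj*(t*t) + (2*q)*t + cjj) :
    q^2 ≤ cjj * gjj := by
  have h := discrim_le_zero hdisc
  rw [discrim] at h
  nlinarith [h]

lemma div_bound_aux (kk ww uu TGv X : ℝ) (hk : 0 < kk) (hw : 0 < ww) (hu : 0 < uu)
    (h : (2*ww*X)^2 ≤ 2*ww*uu*TGv) : kk*ww*X^2/uu ≤ (1/2)*kk*TGv := by
  rw [div_le_iff₀ hu]
  nlinarith [mul_le_mul_of_nonneg_left h hk.le, hw, hk]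

/-- The `A₂`-criterion: `A_UW + A_WW = (1/2)w(3u + 2w − b − 1) + (1/2)k[w·tr(C̃⁺) + b·tr(C̃⁺S)]`,
and the design-independent lower bound `A_UW + A_WW ≥ A_2bound
= (1/2)w(3u + 2w − b − 1) + kw(b − 1)²/u`. -/
theorem stmt19
    (u b k : ℕ) (hu : 0 < u) (hb : 3 ≤ b) (hk : 1 ≤ k) (hub : b - 1 ≤ u)
    (w : ℕ) (hw : 2 * u + w = b * k) (hw1 : 1 ≤ w)
    (s : Fin b → ℕ) (hs : ∀ j, s j ≤ k - 1) (hssum : ∑ j, s j = w)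
    (N : Matrix (Fin u) (Fin b) ℕ)
    (hrow : ∀ i, ∑ j, N i j = 2)
    (hcol : ∀ j, ∑ i, N i j = k - s j)
    (Nr : Matrix (Fin u) (Fin b) ℝ) (hNr : Nr = N.map (Nat.cast : ℕ → ℝ))
    (S : Matrix (Fin b) (Fin b) ℝ) (hS : S = Matrix.diagonal fun j => (s j : ℝ))
    (Ct : Matrix (Fin b) (Fin b) ℝ)
    (hCt : Ct = (k : ℝ) • (1 : Matrix (Fin b) (Fin b) ℝ) - S - (1/2 : ℝ) • (Nrᵀ * Nr))
    (hCtpsd : Ct.PosSemidef)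
    (hCtker : ∀ x : Fin b → ℝ, Ct.mulVec x = 0 ↔ ∃ c : ℝ, x = fun _ => c)
    (Ctp : Matrix (Fin b) (Fin b) ℝ)
    (hCtp1 : Ct * Ctp * Ct = Ct) (hCtp2 : Ctp * Ct * Ctp = Ctp)
    (hCtp3 : (Ct * Ctp)ᵀ = Ct * Ctp) (hCtp4 : (Ctp * Ct)ᵀ = Ctp * Ct)
    (ξ : Fin u → Fin b → Fin b → ℝ)
    (hξ : ∀ i j, ξ i j
        = (Pi.single j 1 : Fin b → ℝ) - (1/2 : ℝ) • Nrᵀ.mulVec (Pi.single i 1))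
    (AWW AUW : ℝ)
    (hAWW : AWW = (∑ j : Fin b, (s j : ℝ) * ((s j : ℝ) - 1)) +
      ∑ j : Fin b, ∑ j' : Fin b,
        if j < j' then
          (s j : ℝ) * (s j' : ℝ) *
            (2 + ((Pi.single j 1 : Fin b → ℝ) - Pi.single j' 1) ⬝ᵥ
              Ctp.mulVec ((Pi.single j 1 : Fin b → ℝ) - Pi.single j' 1))
        else 0)
    (hAUW : AUW = ∑ i : Fin u, ∑ j : Fin b, (s j : ℝ) *
      ((3/2 : ℝ) + (ξ i j) ⬝ᵥ Ctp.mulVec (ξ i j))) :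
    AUW + AWW
      = (1/2 : ℝ) * (w : ℝ) * (3 * (u : ℝ) + 2 * (w : ℝ) - (b : ℝ) - 1)
        + (1/2 : ℝ) * (k : ℝ) * ((w : ℝ) * Ctp.trace + (b : ℝ) * (Ctp * S).trace) ∧
    (1/2 : ℝ) * (w : ℝ) * (3 * (u : ℝ) + 2 * (w : ℝ) - (b : ℝ) - 1)
        + (k : ℝ) * (w : ℝ) * ((b : ℝ) - 1) ^ 2 / (u : ℝ)
      ≤ AUW + AWW := by
  -- basic positivity and cast facts
  have hb0 : (0:ℝ) < b := by
    have : 0 < b := by omega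
    exact_mod_cast this
  have hbne : (b:ℝ) ≠ 0 := ne_of_gt hb0
  have hu0 : (0:ℝ) < u := by exact_mod_cast hu
  have hk0 : (0:ℝ) < k := by
    have : 0 < k := by omega
    exact_mod_cast this
  have hw0 : (0:ℝ) < w := by
    have : 0 < w := by omega
    exact_mod_cast this
  have hb1 : (1:ℝ) ≤ (b:ℝ) - 1 := by
    have : (3:ℝ) ≤ b := by exact_mod_cast hb
    linarith
  have hsk : ∀ j, s j ≤ k := fun j => le_trans (hs j) (Nat.sub_le k 1)
  have hsw : ∑ j, (s j : ℝ) = (w:ℝ) := by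
    have := congrArg (Nat.cast : ℕ → ℝ) hssum
    push_cast at this
    exact this
  have hbk : 2*(u:ℝ) + (w:ℝ) = (b:ℝ)*(k:ℝ) := by
    have := congrArg (Nat.cast : ℕ → ℝ) hw
    push_cast at this
    linarith
  -- symmetry of Ct
  have hCtsym : Ctᵀ = Ct := by
    rw [hCt, hS]
    simp [Matrix.transpose_sub, Matrix.transpose_smul, Matrix.transpose_one,
      Matrix.diagonal_transpose, Matrix.transpose_mul, Matrix.transpose_transpose]
  have hCtsymE : ∀ a c, Ct a c = Ct c a := by
    intro a c
    conv_lhs => rw [← hCtsym]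
    rfl
  -- symmetry of Ctp (uniqueness-type argument for the Moore–Penrose inverse)
  have hGsym : Ctpᵀ = Ctp := by
    have hABt : Ct * Ctpᵀ = Ctp * Ct := by
      calc Ct * Ctpᵀ = Ctᵀ * Ctpᵀ := by rw [hCtsym]
        _ = (Ctp * Ct)ᵀ := (Matrix.transpose_mul _ _).symm
        _ = Ctp * Ct := hCtp4
    have hAXt : Ctpᵀ * Ct = Ct * Ctp := by
      calc Ctpᵀ * Ct = Ctpᵀ * Ctᵀ := by rw [hCtsym]
        _ = (Ct * Ctp)ᵀ := (Matrix.transpose_mul _ _).symm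
        _ = Ct * Ctp := hCtp3
    have h1 : Ct * Ctpᵀ * Ct = Ct := by
      have := congrArg Matrix.transpose hCtp1
      simpa [Matrix.transpose_mul, hCtsym, Matrix.mul_assoc] using this
    have e1 : Ctp = Ctp * Ctpᵀ * Ct := by
      calc Ctp = Ctp * Ct * Ctp := hCtp2.symm
        _ = Ctp * (Ct * Ctp) := by rw [Matrix.mul_assoc]
        _ = Ctp * (Ctpᵀ * Ct) := by rw [hAXt]
        _ = Ctp * Ctpᵀ * Ct := by rw [Matrix.mul_assoc]
    have e2 : Ctp = Ctp * Ctp * Ct := by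
      calc Ctp = Ctp * Ctpᵀ * Ct := e1
        _ = Ctp * Ctpᵀ * (Ct * Ctp * Ct) := by rw [hCtp1]
        _ = (Ctp * Ctpᵀ * Ct) * (Ctp * Ct) := by simp only [Matrix.mul_assoc]
        _ = Ctp * (Ctp * Ct) := by rw [← e1]
        _ = Ctp * Ctp * Ct := by rw [Matrix.mul_assoc]
    have e3 : Ctpᵀ = Ct * Ctp * Ctpᵀ := by
      have := congrArg Matrix.transpose hCtp2
      calc Ctpᵀ = (Ctp * Ct * Ctp)ᵀ := this.symm
        _ = Ctpᵀ * (Ctp * Ct)ᵀ := by rw [Matrix.transpose_mul]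
        _ = Ctpᵀ * (Ctᵀ * Ctpᵀ) := by rw [Matrix.transpose_mul]
        _ = (Ctpᵀ * Ct) * Ctpᵀ := by rw [hCtsym, Matrix.mul_assoc]
        _ = (Ct * Ctp) * Ctpᵀ := by rw [hAXt]
    have e4 : Ctpᵀ = Ct * Ctpᵀ * Ctpᵀ := by
      calc Ctpᵀ = Ct * Ctp * Ctpᵀ := e3
        _ = (Ct * Ctpᵀ * Ct) * Ctp * Ctpᵀ := by rw [h1]
        _ = (Ct * Ctpᵀ) * (Ct * Ctp * Ctpᵀ) := by simp only [Matrix.mul_assoc]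
        _ = (Ct * Ctpᵀ) * Ctpᵀ := by rw [← e3]
    calc Ctpᵀ = Ct * Ctpᵀ * Ctpᵀ := e4
      _ = (Ctp * Ct) * Ctpᵀ := by rw [hABt]
      _ = Ctp * (Ct * Ctpᵀ) := by rw [Matrix.mul_assoc]
      _ = Ctp * (Ctp * Ct) := by rw [hABt]
      _ = Ctp * Ctp * Ct := by rw [Matrix.mul_assoc]
      _ = Ctp := e2.symm
  have hGsymE : ∀ a c, Ctp a c = Ctp c a := by
    intro a c
    conv_lhs => rw [← hGsym]
    rfl
  have hPQ : Ct * Ctp = Ctp * Ct := by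
    calc Ct * Ctp = (Ct * Ctp)ᵀ := hCtp3.symm
      _ = Ctpᵀ * Ctᵀ := Matrix.transpose_mul _ _
      _ = Ctp * Ct := by rw [hGsym, hCtsym]
  -- kernel facts
  have hCt1 : Ct *ᵥ (fun _ => (1:ℝ)) = 0 := (hCtker _).mpr ⟨1, rfl⟩
  have hG1 : Ctp *ᵥ (fun _ => (1:ℝ)) = 0 := by
    have e2 : Ctp = Ctp * Ctp * Ct := by
      calc Ctp = Ctp * Ct * Ctp := hCtp2.symm
        _ = Ctp * (Ct * Ctp) := by rw [Matrix.mul_assoc]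
        _ = Ctp * (Ctp * Ct) := by rw [hPQ]
        _ = Ctp * Ctp * Ct := by rw [Matrix.mul_assoc]
    rw [e2, ← Matrix.mulVec_mulVec, hCt1, Matrix.mulVec_zero]
  have hGrow : ∀ j, ∑ m, Ctp j m = 0 := by
    intro j
    have := congrFun hG1 j
    simpa [Matrix.mulVec, dotProduct] using this
  have hGcol : ∀ m, ∑ j, Ctp j m = 0 := by
    intro m
    rw [← hGrow m]
    exact Finset.sum_congr rfl fun j _ => hGsymE j m
  -- entries of the projection Ctp * Ct
  have hQ : ∀ a c : Fin b, (Ctp * Ct) a c = (if a = c then 1 else 0) - 1/(b:ℝ) := by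
    have hQ1 : (Ctp * Ct) *ᵥ (fun _ => (1:ℝ)) = 0 := by
      rw [← Matrix.mulVec_mulVec, hCt1, Matrix.mulVec_zero]
    have hQsymE : ∀ a c : Fin b, (Ctp * Ct) a c = (Ctp * Ct) c a := by
      intro a c
      conv_lhs => rw [← hCtp4]
      rfl
    intro a c
    set v : Fin b → ℝ := (1 - Ctp * Ct) *ᵥ (Pi.single c 1) with hv
    have hvz : Ct *ᵥ v = 0 := by
      rw [hv, Matrix.mulVec_mulVec, Matrix.mul_sub, Matrix.mul_one, ← Matrix.mul_assoc,
        hCtp1, sub_self, Matrix.zero_mulVec]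
    obtain ⟨cst, hcst⟩ := (hCtker v).mp hvz
    have hva : ∀ a : Fin b, v a = (if a = c then 1 else 0) - (Ctp * Ct) a c := by
      intro a
      rw [hv]
      simp [Matrix.sub_mulVec, Matrix.mulVec_single, Matrix.one_apply, Pi.single_apply]
    have hsumQ : ∑ x : Fin b, (Ctp * Ct) x c = 0 := by
      have h0 : ∑ x : Fin b, (Ctp * Ct) c x = 0 := by
        have := congrFun hQ1 c
        simpa [Matrix.mulVec, dotProduct] using this
      rw [← h0]
      exact Finset.sum_congr rfl fun x _ => hQsymE x c
    have hsumv : ∑ x : Fin b, v x = 1 - 0 := by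
      simp only [hva]
      rw [Finset.sum_sub_distrib, hsumQ]
      simp
    have hcstval : cst = 1/(b:ℝ) := by
      rw [hcst] at hsumv
      simp at hsumv
      field_simp
      linarith [hsumv]
    have := hva a
    rw [hcst] at this
    simp only [hcstval] at this
    linarith [this]
  have hQd : ∀ j, (Ctp * Ct) j j = 1 - 1/(b:ℝ) := by
    intro j; rw [hQ j j]; simp
  have htrQ : ∑ l, ∑ m, Ctp l m * Ct l m = (b:ℝ) - 1 := by
    have h1 : ∀ l, (∑ m, Ctp l m * Ct l m) = (Ctp * Ct) l l := by
      intro l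
      rw [Matrix.mul_apply]
      exact Finset.sum_congr rfl fun m _ => by rw [hCtsymE l m]
    rw [Finset.sum_congr rfl fun l _ => h1 l]
    rw [Finset.sum_congr rfl fun l _ => hQd l]
    rw [Finset.sum_const, Finset.card_univ, Fintype.card_fin, nsmul_eq_mul]
    field_simp
  -- entry facts about N
  have hNrE : ∀ i l, Nr i l = (N i l : ℝ) := by
    intro i l; rw [hNr]; simp [Matrix.map_apply]
  have hNcol : ∀ l, ∑ i, (N i l : ℝ) = (k:ℝ) - (s l:ℝ) := by
    intro l
    have h1 := congrArg (Nat.cast : ℕ → ℝ) (hcol l)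
    push_cast [Nat.cast_sub (hsk l)] at h1
    exact h1
  have hCtE : ∀ l m, Ct l m
      = (k:ℝ)*(if l = m then 1 else 0) - (if l = m then (s l:ℝ) else 0)
        - (1/2)*(∑ i, (N i l:ℝ)*(N i m:ℝ)) := by
    intro l m
    rw [hCt, hS]
    simp only [Matrix.sub_apply, Matrix.smul_apply, Matrix.one_apply,
      Matrix.diagonal_apply, Matrix.mul_apply, Matrix.transpose_apply, smul_eq_mul]
    rw [Finset.sum_congr rfl fun i (_ : i ∈ Finset.univ) => by rw [hNrE i l, hNrE i m]]
  have hNN : ∀ l m, ∑ i, (N i l:ℝ)*(N i m:ℝ)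
      = 2*((if l = m then (k:ℝ) - (s l:ℝ) else 0) - Ct l m) := by
    intro l m
    have := hCtE l m
    by_cases h : l = m
    · simp only [h, if_true] at this ⊢
      linarith [this]
    · simp only [h, if_false] at this ⊢
      linarith [this]
  -- the quadratic forms in AUW
  have hxival : ∀ i j, ξ i j = fun l => (if l = j then (1:ℝ) else 0) - (1/2)*(N i l:ℝ) := by
    intro i j
    funext l
    rw [hξ]
    simp [Pi.single_apply, Matrix.mulVec, dotProduct, Matrix.transpose_apply, hNrE,
      mul_ite, ite_mul, Finset.sum_ite_eq, Finset.sum_ite_eq']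
  have hxiqf : ∀ i j, ξ i j ⬝ᵥ Ctp.mulVec (ξ i j)
      = Ctp j j - (1/2)*(∑ m, Ctp j m * (N i m:ℝ)) - (1/2)*(∑ l, (N i l:ℝ) * Ctp l j)
        + (1/4)*(∑ l, ∑ m, (N i l:ℝ) * Ctp l m * (N i m:ℝ)) := by
    intro i j
    rw [hxival i j]
    exact quad_expand Ctp (fun l => (N i l : ℝ)) j
  -- notation for the three basic scalars
  set trG := ∑ j, Ctp j j with htrGdef
  set trGS := ∑ j, (s j:ℝ) * Ctp j j with htrGSdef
  set sGs := ∑ j : Fin b, ∑ m, (s j:ℝ) * (s m:ℝ) * Ctp j m with hsGsdef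
  -- ### the AWW formula
  have hAWW' : AWW = (w:ℝ)^2 - w + (w:ℝ) * trGS - sGs := by
    have hquad : ∀ j j' : Fin b,
        ((Pi.single j 1 : Fin b → ℝ) - Pi.single j' 1) ⬝ᵥ
          Ctp.mulVec ((Pi.single j 1 : Fin b → ℝ) - Pi.single j' 1)
        = Ctp j j - Ctp j j' - Ctp j' j + Ctp j' j' := by
      intro j j'
      simp [dotProduct, Matrix.mulVec, Pi.single_apply, mul_sub, sub_mul,
        Finset.sum_sub_distrib, ite_mul, mul_ite, Finset.sum_ite_eq, Finset.sum_ite_eq']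
      ring
    set F : Fin b → Fin b → ℝ := fun j j' =>
      (s j : ℝ) * (s j' : ℝ) * (2 + (Ctp j j - Ctp j j' - Ctp j' j + Ctp j' j')) with hF
    have hAWWF : AWW = (∑ j : Fin b, (s j : ℝ) * ((s j : ℝ) - 1)) +
        ∑ j : Fin b, ∑ j' : Fin b, (if j < j' then F j j' else 0) := by
      rw [hAWW]
      congr 1
      apply Finset.sum_congr rfl; intro j _
      apply Finset.sum_congr rfl; intro j' _
      rw [hquad j j']
    have hFsym : ∀ a c : Fin b, F a c = F c a := by
      intro a c; simp only [hF]; ring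
    rw [hAWWF, half_offdiag F hFsym]
    have hfull : (∑ j : Fin b, ∑ j' : Fin b, F j j')
        = 2*(w:ℝ)^2 + 2*(w:ℝ)*trGS - 2 * sGs := by
      have hinner : ∀ j : Fin b, ∑ j' : Fin b, F j j'
          = (s j:ℝ) * (2*(w:ℝ)) + ((s j:ℝ) * Ctp j j) * (w:ℝ)
            + (s j:ℝ) * (∑ m, (s m:ℝ) * Ctp m m)
            - (∑ m, (s j:ℝ) * (s m:ℝ) * Ctp j m)
            - (∑ m, (s j:ℝ) * (s m:ℝ) * Ctp m j) := by
        intro j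
        have expand : ∀ j' : Fin b, F j j'
            = (s j:ℝ) * (2 * (s j':ℝ)) + ((s j:ℝ) * Ctp j j) * (s j':ℝ)
              + (s j:ℝ) * ((s j':ℝ) * Ctp j' j')
              - ((s j:ℝ) * (s j':ℝ) * Ctp j j')
              - ((s j:ℝ) * (s j':ℝ) * Ctp j' j) := by
          intro j'; simp only [hF]; ring
        rw [Finset.sum_congr rfl fun j' _ => expand j']
        rw [Finset.sum_sub_distrib, Finset.sum_sub_distrib, Finset.sum_add_distrib,
          Finset.sum_add_distrib, ← Finset.mul_sum]
        have A1 : ∑ i : Fin b, 2 * (s i:ℝ) = 2*(w:ℝ) := by rw [← Finset.mul_sum, hsw]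
        have A2 : ∑ x : Fin b, (s j:ℝ) * Ctp j j * (s x:ℝ)
            = (s j:ℝ) * Ctp j j * (w:ℝ) := by rw [← Finset.mul_sum, hsw]
        have A3 : ∑ x : Fin b, (s j:ℝ) * ((s x:ℝ) * Ctp x x)
            = (s j:ℝ) * (∑ m, (s m:ℝ) * Ctp m m) := by rw [← Finset.mul_sum]
        rw [A1, A2, A3]
      rw [Finset.sum_congr rfl fun j _ => hinner j]
      rw [Finset.sum_sub_distrib, Finset.sum_sub_distrib, Finset.sum_add_distrib,
        Finset.sum_add_distrib, ← Finset.sum_mul, ← Finset.sum_mul, ← Finset.sum_mul, hsw]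
      have swap : (∑ j : Fin b, ∑ m, (s j:ℝ) * (s m:ℝ) * Ctp m j)
          = ∑ j : Fin b, ∑ m, (s j:ℝ) * (s m:ℝ) * Ctp j m := by
        rw [Finset.sum_comm]
        apply Finset.sum_congr rfl; intro j _
        apply Finset.sum_congr rfl; intro m _
        ring
      rw [swap]
      rw [htrGSdef, hsGsdef]
      ring
    have hdiag : (∑ j : Fin b, F j j) = 2 * ∑ j, (s j:ℝ)^2 := by
      rw [Finset.mul_sum]
      apply Finset.sum_congr rfl; intro j _
      simp only [hF]; ring
    have hss : (∑ j : Fin b, (s j : ℝ) * ((s j : ℝ) - 1))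
        = (∑ j, (s j:ℝ)^2) - (w:ℝ) := by
      rw [← hsw, ← Finset.sum_sub_distrib]
      apply Finset.sum_congr rfl; intro j _; ring
    rw [hfull, hdiag, hss]
    ring
  -- ### the AUW formula
  have hAUW' : AUW = 3/2*(u:ℝ)*(w:ℝ) + (u:ℝ)*trGS + sGs
      + (1/2)*(w:ℝ)*((k:ℝ)*trG - trGS - ((b:ℝ)-1)) := by
    have step1 : ∀ j : Fin b, (∑ i, ξ i j ⬝ᵥ Ctp.mulVec (ξ i j))
        = (u:ℝ) * Ctp j j + (1/2) * (∑ m, Ctp j m * (s m:ℝ))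
          + (1/2) * (∑ l, (s l:ℝ) * Ctp l j)
          + (1/2) * ((k:ℝ) * trG - trGS - ((b:ℝ)-1)) := by
      intro j
      rw [Finset.sum_congr rfl fun i _ => hxiqf i j]
      rw [Finset.sum_add_distrib, Finset.sum_sub_distrib, Finset.sum_sub_distrib,
        Finset.sum_const, Finset.card_univ, Fintype.card_fin]
      have T1 : (∑ i : Fin u, (1/2)*(∑ m, Ctp j m * (N i m:ℝ)))
          = -(1/2) * (∑ m, Ctp j m * (s m:ℝ)) := by
        rw [← Finset.mul_sum, Finset.sum_comm]
        have h : ∀ m : Fin b, (∑ i : Fin u, Ctp j m * (N i m:ℝ))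
            = Ctp j m * (k:ℝ) - Ctp j m * (s m:ℝ) := by
          intro m; rw [← Finset.mul_sum, hNcol]; ring
        rw [Finset.sum_congr rfl fun m _ => h m, Finset.sum_sub_distrib,
          ← Finset.sum_mul, hGrow]
        ring
      have T2 : (∑ i : Fin u, (1/2)*(∑ l, (N i l:ℝ) * Ctp l j))
          = -(1/2) * (∑ l, (s l:ℝ) * Ctp l j) := by
        rw [← Finset.mul_sum, Finset.sum_comm]
        have h : ∀ l : Fin b, (∑ i : Fin u, (N i l:ℝ) * Ctp l j)
            = (k:ℝ) * Ctp l j - (s l:ℝ) * Ctp l j := by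
          intro l; rw [← Finset.sum_mul, hNcol]; ring
        rw [Finset.sum_congr rfl fun l _ => h l, Finset.sum_sub_distrib,
          ← Finset.mul_sum, hGcol]
        ring
      have T3 : (∑ i : Fin u, (1/4)*(∑ l, ∑ m, (N i l:ℝ) * Ctp l m * (N i m:ℝ)))
          = (1/2) * ((k:ℝ) * trG - trGS - ((b:ℝ)-1)) := by
        rw [← Finset.mul_sum, Finset.sum_comm]
        have inner : ∀ l : Fin b, (∑ i : Fin u, ∑ m, (N i l:ℝ) * Ctp l m * (N i m:ℝ))
            = ∑ m, Ctp l m * (2*((if l = m then (k:ℝ) - (s l:ℝ) else 0) - Ct l m)) := by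
          intro l
          rw [Finset.sum_comm]
          apply Finset.sum_congr rfl; intro m _
          rw [← hNN l m, Finset.mul_sum]
          apply Finset.sum_congr rfl; intro i _; ring
        rw [Finset.sum_congr rfl fun l _ => inner l]
        have expand : ∀ l : Fin b,
            (∑ m, Ctp l m * (2*((if l = m then (k:ℝ) - (s l:ℝ) else 0) - Ct l m)))
            = 2 * ((k:ℝ) * Ctp l l - (s l:ℝ) * Ctp l l) - 2 * (∑ m, Ctp l m * Ct l m) := by
          intro l
          have h : ∀ m : Fin b, Ctp l m * (2*((if l = m then (k:ℝ) - (s l:ℝ) else 0) - Ct l m))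
              = 2 * (if m = l then Ctp l m * ((k:ℝ) - (s l:ℝ)) else 0)
                - 2 * (Ctp l m * Ct l m) := by
            intro m
            by_cases hlm : l = m
            · subst hlm; simp; ring
            · simp [hlm, Ne.symm hlm]; ring
          rw [Finset.sum_congr rfl fun m _ => h m, Finset.sum_sub_distrib]
          rw [← Finset.mul_sum, ← Finset.mul_sum, Finset.sum_ite_eq' Finset.univ l
            (fun m => Ctp l m * ((k:ℝ) - (s l:ℝ)))]
          simp; ring
        rw [Finset.sum_congr rfl fun l _ => expand l, Finset.sum_sub_distrib,
          ← Finset.mul_sum, ← Finset.mul_sum, Finset.sum_sub_distrib, ← Finset.mul_sum,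
          htrQ]
        rw [htrGdef, htrGSdef]
        ring
      rw [T1, T2, T3]
      ring
    rw [hAUW, Finset.sum_comm]
    have perj : ∀ j : Fin b,
        (∑ i : Fin u, (s j : ℝ) * ((3/2 : ℝ) + (ξ i j) ⬝ᵥ Ctp.mulVec (ξ i j)))
        = (s j:ℝ) * (3/2*(u:ℝ)) + (s j:ℝ) * ((u:ℝ) * Ctp j j)
          + (1/2) * (∑ m, (s j:ℝ) * (s m:ℝ) * Ctp j m)
          + (1/2) * (∑ l, (s j:ℝ) * (s l:ℝ) * Ctp l j)
          + (s j:ℝ) * ((1/2) * ((k:ℝ) * trG - trGS - ((b:ℝ)-1))) := by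
      intro j
      rw [← Finset.mul_sum, Finset.sum_add_distrib, Finset.sum_const, Finset.card_univ,
        Fintype.card_fin, step1 j]
      have e1 : (∑ m, (s j:ℝ) * (s m:ℝ) * Ctp j m)
          = (s j:ℝ) * (∑ m, Ctp j m * (s m:ℝ)) := by
        rw [Finset.mul_sum]; apply Finset.sum_congr rfl; intro m _; ring
      have e2 : (∑ l, (s j:ℝ) * (s l:ℝ) * Ctp l j)
          = (s j:ℝ) * (∑ l, (s l:ℝ) * Ctp l j) := by
        rw [Finset.mul_sum]; apply Finset.sum_congr rfl; intro l _; ring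
      rw [e1, e2]
      ring
    rw [Finset.sum_congr rfl fun j _ => perj j]
    rw [Finset.sum_add_distrib, Finset.sum_add_distrib, Finset.sum_add_distrib,
      Finset.sum_add_distrib]
    rw [← Finset.sum_mul, ← Finset.sum_mul, hsw]
    have H2 : (∑ x : Fin b, (s x:ℝ) * ((u:ℝ) * Ctp x x)) = (u:ℝ) * trGS := by
      rw [htrGSdef, Finset.mul_sum]; apply Finset.sum_congr rfl; intro x _; ring
    have H3 : (∑ x : Fin b, 1/2 * ∑ m : Fin b, (s x:ℝ) * (s m:ℝ) * Ctp x m)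
        = 1/2 * sGs := by
      rw [← Finset.mul_sum]
    have H4 : (∑ x : Fin b, 1/2 * ∑ l : Fin b, (s x:ℝ) * (s l:ℝ) * Ctp l x)
        = 1/2 * sGs := by
      rw [← Finset.mul_sum, hsGsdef]
      congr 1
      rw [Finset.sum_comm]
      apply Finset.sum_congr rfl; intro j _
      apply Finset.sum_congr rfl; intro m _
      ring
    rw [H2, H3, H4]
    ring
  -- trace identifications
  have hTr : Ctp.trace = trG := by
    rw [htrGdef]; simp [Matrix.trace, Matrix.diag]
  have hTrS : (Ctp * S).trace = trGS := by
    rw [htrGSdef, hS]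
    simp only [Matrix.trace, Matrix.diag, Matrix.mul_diagonal]
    apply Finset.sum_congr rfl; intro j _; ring
  -- ### the identity
  have hID : AUW + AWW
      = (1/2 : ℝ) * (w : ℝ) * (3 * (u : ℝ) + 2 * (w : ℝ) - (b : ℝ) - 1)
        + (1/2 : ℝ) * (k : ℝ) * ((w : ℝ) * Ctp.trace + (b : ℝ) * (Ctp * S).trace) := by
    rw [hAWW', hAUW', hTr, hTrS]
    linear_combination (trGS/2) * hbk
  refine ⟨hID, ?_⟩
  -- ### the lower bound
  -- diagonal positivity and pointwise Cauchy–Schwarz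
  have hCd : ∀ j, 0 ≤ Ct j j := by
    intro j
    have := hCtpsd.dotProduct_mulVec_nonneg (Pi.single j 1)
    simpa [Matrix.mulVec_single, single_dotProduct] using this
  have hGd : ∀ j, 0 ≤ Ctp j j := by
    intro j
    set y : Fin b → ℝ := fun m => Ctp m j with hy
    have hyy : y ⬝ᵥ (Ct *ᵥ y) = Ctp j j := by
      have h0 : Ctp j j = (Ctp * Ct * Ctp) j j := by rw [hCtp2]
      rw [h0]
      simp only [Matrix.mul_apply, hy, dotProduct, Matrix.mulVec, Finset.sum_mul,
        Finset.mul_sum]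
      rw [Finset.sum_comm]
      apply Finset.sum_congr rfl; intro l _
      apply Finset.sum_congr rfl; intro m _
      rw [hGsymE m j]; ring
    have := hCtpsd.dotProduct_mulVec_nonneg y
    rw [← hyy]
    simpa using this
  have hCS : ∀ j, (1 - 1/(b:ℝ))^2 ≤ Ct j j * Ctp j j := by
    intro j
    set y : Fin b → ℝ := fun m => Ctp m j with hy
    have hyy : y ⬝ᵥ (Ct *ᵥ y) = Ctp j j := by
      have h0 : Ctp j j = (Ctp * Ct * Ctp) j j := by rw [hCtp2]
      rw [h0]
      simp only [Matrix.mul_apply, hy, dotProduct, Matrix.mulVec, Finset.sum_mul,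
        Finset.mul_sum]
      rw [Finset.sum_comm]
      apply Finset.sum_congr rfl; intro l _
      apply Finset.sum_congr rfl; intro m _
      rw [hGsymE m j]; ring
    have hA : (Pi.single j 1 : Fin b → ℝ) ⬝ᵥ (Ct *ᵥ y) = ∑ m, Ct j m * Ctp m j := by
      simp [dotProduct, Matrix.mulVec, Pi.single_apply, ite_mul, Finset.sum_ite_eq, hy]
    have hB : y ⬝ᵥ (Ct *ᵥ (Pi.single j 1)) = ∑ m, Ctp m j * Ct m j := by
      simp [dotProduct, Matrix.mulVec, Pi.single_apply, mul_ite, Finset.sum_ite_eq', hy]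
    have hey : (Pi.single j 1 : Fin b → ℝ) ⬝ᵥ (Ct *ᵥ y) = 1 - 1/(b:ℝ) := by
      rw [hA]
      have : (Ct * Ctp) j j = 1 - 1/(b:ℝ) := by rw [hPQ]; exact hQd j
      rw [← this]
      simp only [Matrix.mul_apply]
    have hye : y ⬝ᵥ (Ct *ᵥ (Pi.single j 1)) = 1 - 1/(b:ℝ) := by
      rw [hB, ← hey, hA]
      apply Finset.sum_congr rfl; intro m _
      rw [hCtsymE j m]; ring
    have hej : (Pi.single j 1 : Fin b → ℝ) ⬝ᵥ (Ct *ᵥ (Pi.single j 1)) = Ct j j := by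
      simp [Matrix.mulVec_single, single_dotProduct]
    have hdisc : ∀ t : ℝ, 0 ≤ (Ctp j j) * (t*t) + (2*(1 - 1/(b:ℝ)))*t + Ct j j := by
      intro t
      have hp : 0 ≤ (Pi.single j 1 + t • y) ⬝ᵥ (Ct *ᵥ (Pi.single j 1 + t • y)) := by
        have := hCtpsd.dotProduct_mulVec_nonneg (Pi.single j 1 + t • y); simpa using this
      rw [Matrix.mulVec_add, Matrix.mulVec_smul, dotProduct_add, add_dotProduct,
        add_dotProduct, dotProduct_smul, smul_dotProduct, smul_dotProduct,
        dotProduct_smul, hej, hyy, hey, hye] at hp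
      simp only [smul_eq_mul] at hp
      exact hp.trans_eq (by ring)
    exact cs_aux _ _ _ hdisc
  -- weights
  set D : Fin b → ℝ := fun j => (w:ℝ) + (b:ℝ)*(s j:ℝ) with hD
  have hDnn : ∀ j, 0 ≤ D j := by
    intro j
    simp only [hD]
    exact add_nonneg hw0.le (mul_nonneg hb0.le (Nat.cast_nonneg _))
  set TG := ∑ j, D j * Ctp j j with hTG
  set TC := ∑ j, D j * Ct j j with hTC
  have hTGeq : (w : ℝ) * Ctp.trace + (b : ℝ) * (Ctp * S).trace = TG := by
    rw [hTr, hTrS, hTG, htrGdef, htrGSdef, Finset.mul_sum, Finset.mul_sum,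
      ← Finset.sum_add_distrib]
    apply Finset.sum_congr rfl; intro j _
    simp only [hD]; ring
  -- Cauchy–Schwarz for the weighted sums
  have hDsum : ∑ j, D j = 2*(b:ℝ)*(w:ℝ) := by
    simp only [hD]
    rw [Finset.sum_add_distrib, ← Finset.mul_sum, hsw, Finset.sum_const,
      Finset.card_univ, Fintype.card_fin, nsmul_eq_mul]
    ring
  have hr_lb : ∀ j, D j * (1 - 1/(b:ℝ))
      ≤ Real.sqrt ((D j * Ct j j) * (D j * Ctp j j)) := by
    intro j
    apply Real.le_sqrt_of_sq_le
    have h1 : (D j * (1 - 1/(b:ℝ)))^2 = (D j)^2 * (1 - 1/(b:ℝ))^2 := by ring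
    have h2 : (D j)^2 * (1 - 1/(b:ℝ))^2 ≤ (D j)^2 * (Ct j j * Ctp j j) :=
      mul_le_mul_of_nonneg_left (hCS j) (sq_nonneg _)
    calc (D j * (1 - 1/(b:ℝ)))^2 = (D j)^2 * (1 - 1/(b:ℝ))^2 := h1
      _ ≤ (D j)^2 * (Ct j j * Ctp j j) := h2
      _ = (D j * Ct j j) * (D j * Ctp j j) := by ring
  have hsum_sq : (∑ j, Real.sqrt ((D j * Ct j j) * (D j * Ctp j j)))^2 ≤ TC * TG := by
    rw [hTC, hTG]
    apply Finset.sum_sq_le_sum_mul_sum_of_sq_eq_mul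
    · intro j _; exact mul_nonneg (hDnn j) (hCd j)
    · intro j _; exact mul_nonneg (hDnn j) (hGd j)
    · intro j _
      exact Real.sq_sqrt (mul_nonneg (mul_nonneg (hDnn j) (hCd j))
        (mul_nonneg (hDnn j) (hGd j)))
  have hS1 : 2*(w:ℝ)*((b:ℝ)-1) ≤ ∑ j, Real.sqrt ((D j * Ct j j) * (D j * Ctp j j)) := by
    have heq : (∑ j, D j * (1 - 1/(b:ℝ))) = 2*(w:ℝ)*((b:ℝ)-1) := by
      rw [← Finset.sum_mul, hDsum]
      field_simp
    rw [← heq]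
    exact Finset.sum_le_sum fun j _ => hr_lb j
  have hS1nn : (0:ℝ) ≤ 2*(w:ℝ)*((b:ℝ)-1) :=
    mul_nonneg (by linarith) (by linarith)
  have hkey : (2*(w:ℝ)*((b:ℝ)-1))^2 ≤ TC * TG := by
    calc (2*(w:ℝ)*((b:ℝ)-1))^2
        ≤ (∑ j, Real.sqrt ((D j * Ct j j) * (D j * Ctp j j)))^2 :=
          pow_le_pow_left₀ hS1nn hS1 2
      _ ≤ TC * TG := hsum_sq
  -- upper bound for TC
  have hnatle : ∀ n : ℕ, (n:ℝ) ≤ (n:ℝ)*(n:ℝ) := by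
    intro n
    have h : n ≤ n*n := by
      rcases Nat.eq_zero_or_pos n with h | h
      · simp [h]
      · exact Nat.le_mul_of_pos_left n h
    exact_mod_cast h
  have hNsq_col : ∀ j, (k:ℝ) - (s j:ℝ) ≤ ∑ i, (N i j:ℝ)*(N i j:ℝ) := by
    intro j
    have h : ∑ i, N i j ≤ ∑ i, N i j * N i j :=
      Finset.sum_le_sum fun i _ => by
        rcases Nat.eq_zero_or_pos (N i j) with h | h
        · simp [h]
        · exact Nat.le_mul_of_pos_left _ h
    have h2 : ((∑ i, N i j : ℕ):ℝ) ≤ ((∑ i, N i j * N i j : ℕ):ℝ) := by exact_mod_cast h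
    push_cast at h2
    rw [← hNcol j]
    exact h2
  have hCtjj : ∀ j, Ct j j = ((k:ℝ) - (s j:ℝ)) - (1/2)*(∑ i, (N i j:ℝ)*(N i j:ℝ)) := by
    intro j
    have := hCtE j j
    simpa using this
  have hCtjj_ub : ∀ j, Ct j j ≤ ((k:ℝ) - (s j:ℝ))/2 := by
    intro j
    have := hNsq_col j
    rw [hCtjj j]
    linarith
  have htrCt : ∑ j, Ct j j ≤ (u:ℝ) := by
    have hjsum : ∑ j : Fin b, ((k:ℝ) - (s j:ℝ)) = (b:ℝ)*(k:ℝ) - (w:ℝ) := by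
      rw [Finset.sum_sub_distrib, hsw, Finset.sum_const, Finset.card_univ,
        Fintype.card_fin, nsmul_eq_mul]
    have hdouble : 2*(u:ℝ) ≤ ∑ j : Fin b, ∑ i : Fin u, (N i j:ℝ)*(N i j:ℝ) := by
      rw [Finset.sum_comm]
      have hper : ∀ i : Fin u, (2:ℝ) ≤ ∑ j, (N i j:ℝ)*(N i j:ℝ) := by
        intro i
        have h : ∑ j, N i j ≤ ∑ j, N i j * N i j :=
          Finset.sum_le_sum fun j _ => by
            rcases Nat.eq_zero_or_pos (N i j) with h | h
            · simp [h]
            · exact Nat.le_mul_of_pos_left _ h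
        rw [hrow i] at h
        have h2 : ((2:ℕ):ℝ) ≤ ((∑ j, N i j * N i j : ℕ):ℝ) := by exact_mod_cast h
        push_cast at h2
        exact h2
      calc 2*(u:ℝ) = ∑ _i : Fin u, (2:ℝ) := by
            rw [Finset.sum_const, Finset.card_univ, Fintype.card_fin, nsmul_eq_mul]; ring
        _ ≤ ∑ i : Fin u, ∑ j, (N i j:ℝ)*(N i j:ℝ) := Finset.sum_le_sum fun i _ => hper i
    have hsplit : ∑ j, Ct j j
        = (∑ j : Fin b, ((k:ℝ) - (s j:ℝ)))
          - (1/2)*(∑ j : Fin b, ∑ i : Fin u, (N i j:ℝ)*(N i j:ℝ)) := by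
      rw [Finset.sum_congr rfl fun j _ => hCtjj j, Finset.sum_sub_distrib,
        ← Finset.mul_sum]
    rw [hsplit, hjsum]
    linarith [hdouble, hbk]
  have hssq : (w:ℝ)^2 ≤ (b:ℝ) * ∑ j, (s j:ℝ)^2 := by
    have := sq_sum_le_card_mul_sum_sq (s := (Finset.univ : Finset (Fin b)))
      (f := fun j => (s j:ℝ))
    simpa [hsw] using this
  have hTCsplit : TC = (w:ℝ)*(∑ j, Ct j j) + (b:ℝ)*(∑ j, (s j:ℝ) * Ct j j) := by
    rw [hTC, Finset.mul_sum, Finset.mul_sum, ← Finset.sum_add_distrib]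
    apply Finset.sum_congr rfl; intro j _
    simp only [hD]; ring
  have hsCt : ∑ j, (s j:ℝ) * Ct j j ≤ ∑ j, (s j:ℝ)*(((k:ℝ) - (s j:ℝ))/2) :=
    Finset.sum_le_sum fun j _ =>
      mul_le_mul_of_nonneg_left (hCtjj_ub j) (Nat.cast_nonneg _)
  have hsCt2 : ∑ j, (s j:ℝ)*(((k:ℝ) - (s j:ℝ))/2)
      = (1/2)*((k:ℝ)*(w:ℝ)) - (1/2)*(∑ j, (s j:ℝ)^2) := by
    rw [Finset.sum_congr rfl fun j _ =>
      (by ring : (s j:ℝ)*(((k:ℝ) - (s j:ℝ))/2)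
        = (1/2)*((k:ℝ)*(s j:ℝ)) - (1/2)*(s j:ℝ)^2)]
    rw [Finset.sum_sub_distrib, ← Finset.mul_sum, ← Finset.mul_sum, ← Finset.mul_sum, hsw]
  have hTCub : TC ≤ 2*(w:ℝ)*(u:ℝ) := by
    have hbkw : (b:ℝ)*(k:ℝ)*(w:ℝ) = (2*(u:ℝ) + (w:ℝ))*(w:ℝ) := by
      rw [← hbk]
    have h1 : ∑ j, (s j:ℝ) * Ct j j ≤ (1/2)*((k:ℝ)*(w:ℝ)) - (1/2)*(∑ j, (s j:ℝ)^2) := by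
      rw [← hsCt2]; exact hsCt
    rw [hTCsplit]
    have h2 : (b:ℝ)*(∑ j, (s j:ℝ) * Ct j j)
        ≤ (b:ℝ)*((1/2)*((k:ℝ)*(w:ℝ)) - (1/2)*(∑ j, (s j:ℝ)^2)) :=
      mul_le_mul_of_nonneg_left h1 hb0.le
    have h3 : (w:ℝ)*(∑ j, Ct j j) ≤ (w:ℝ)*(u:ℝ) :=
      mul_le_mul_of_nonneg_left htrCt hw0.le
    linarith [h2, h3, hssq, hbkw]
  have hTG0 : (0:ℝ) ≤ TG := by
    rw [hTG]
    exact Finset.sum_nonneg fun j _ => mul_nonneg (hDnn j) (hGd j)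
  have hkey2 : (2*(w:ℝ)*((b:ℝ)-1))^2 ≤ 2*(w:ℝ)*(u:ℝ)*TG := by
    calc (2*(w:ℝ)*((b:ℝ)-1))^2 ≤ TC * TG := hkey
      _ ≤ (2*(w:ℝ)*(u:ℝ)) * TG := mul_le_mul_of_nonneg_right hTCub hTG0
  have hfin : (k:ℝ)*(w:ℝ)*((b:ℝ)-1)^2/(u:ℝ) ≤ (1/2)*(k:ℝ)*TG :=
    div_bound_aux (k:ℝ) (w:ℝ) (u:ℝ) TG ((b:ℝ)-1) hk0 hw0 hu0 hkey2
  rw [hID, hTGeq]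
  linarith [hfin]
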